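/- arXiv:1710.04963 — 4 statements merged into one kernel-verified Lean document; each statement's English description precedes it below -/
import Mathlib

section
/- Let K = {0} ∪ {v ∈ ℝ³ : ⟨v, n⟩ ≥ (√2/2)‖v‖} with n = (1,0,0), inducing the partial order u ≼ v iff v - u ∈ K. Then the metric projection P_K onto K is not order-increasing: there exist u, v ∈ ℝ³ with v ≼ u but P_K(v) ⋠ P_K(u). Specifically u = (1, √2, 0) and v = (0, 1/√2, 1/√2) satisfy v ≼ u while P_K(u) - P_K(v) ∉ K. -/
set_option maxHeartbeats 1000000


open scoped InnerProductSpace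

noncomputable abbrev n3 : EuclideanSpace ℝ (Fin 3) := (WithLp.equiv 2 _).symm ![1, 0, 0]

/-- The circular cone of half-angle π/4 around the x-axis. -/
noncomputable def Kcone : Set (EuclideanSpace ℝ (Fin 3)) :=
  {0} ∪ {v | Real.sqrt 2 / 2 * ‖v‖ ≤ ⟪v, n3⟫_ℝ}

/-- `p` is the metric projection of `x` onto `Kcone`: it lies in the cone and is a
nearest point of the cone to `x`. -/
noncomputable def IsProjK (x p : EuclideanSpace ℝ (Fin 3)) : Prop :=
  p ∈ Kcone ∧ ∀ z ∈ Kcone, ‖x - p‖ ≤ ‖x - z‖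

lemma inner_n3 (x : EuclideanSpace ℝ (Fin 3)) : ⟪x, n3⟫_ℝ = x 0 := by
  simp [n3, PiLp.inner_apply, Fin.sum_univ_three, PiLp.toLp_apply]

lemma norm_sq3 (x : EuclideanSpace ℝ (Fin 3)) :
    ‖x‖ ^ 2 = x 0 ^ 2 + x 1 ^ 2 + x 2 ^ 2 := by
  rw [← real_inner_self_eq_norm_sq]
  simp only [PiLp.inner_apply, Fin.sum_univ_three, RCLike.inner_apply, conj_trivial]
  ring

lemma memK_iff (x : EuclideanSpace ℝ (Fin 3)) :
    x ∈ Kcone ↔ 0 ≤ x 0 ∧ x 1 ^ 2 + x 2 ^ 2 ≤ x 0 ^ 2 := by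
  have hn : (0:ℝ) ≤ ‖x‖ := norm_nonneg x
  have hs : (0:ℝ) < Real.sqrt 2 := by positivity
  have hs2 : Real.sqrt 2 ^ 2 = 2 := Real.sq_sqrt (by norm_num)
  have hnx := norm_sq3 x
  constructor
  · rintro (h | h)
    · simp only [Set.mem_singleton_iff] at h
      subst h
      norm_num
    · simp only [Set.mem_setOf_eq, inner_n3] at h
      have h0 : 0 ≤ x 0 := le_trans (by positivity) h
      have hsq : (Real.sqrt 2 / 2 * ‖x‖) ^ 2 ≤ x 0 ^ 2 := by
        apply sq_le_sq' _ h
        nlinarith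
      refine ⟨h0, ?_⟩
      nlinarith
  · rintro ⟨h0, h⟩
    right
    simp only [Set.mem_setOf_eq, inner_n3]
    nlinarith

lemma memK_mid {x y : EuclideanSpace ℝ (Fin 3)} (hx : x ∈ Kcone) (hy : y ∈ Kcone) :
    (1/2 : ℝ) • (x + y) ∈ Kcone := by
  rw [memK_iff] at hx hy ⊢
  obtain ⟨hx0, hx1⟩ := hx
  obtain ⟨hy0, hy1⟩ := hy
  have e0 : ((1/2 : ℝ) • (x + y)) 0 = (x 0 + y 0) / 2 := by
    simp [PiLp.smul_apply, PiLp.add_apply]; ring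
  have e1 : ((1/2 : ℝ) • (x + y)) 1 = (x 1 + y 1) / 2 := by
    simp [PiLp.smul_apply, PiLp.add_apply]; ring
  have e2 : ((1/2 : ℝ) • (x + y)) 2 = (x 2 + y 2) / 2 := by
    simp [PiLp.smul_apply, PiLp.add_apply]; ring
  rw [e0, e1, e2]
  constructor
  · positivity
  · -- Cauchy-Schwarz in 2D
    nlinarith [sq_nonneg (x 1 * y 2 - x 2 * y 1), mul_nonneg hx0 hy0,
      mul_le_mul hx1 hy1 (by positivity) (sq_nonneg (x 0)),
      sq_nonneg (x 1 * y 1 + x 2 * y 2 - x 0 * y 0)]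

lemma proj_unique {x p q : EuclideanSpace ℝ (Fin 3)}
    (hp : IsProjK x p) (hq : IsProjK x q) : q = p := by
  have hm := memK_mid hp.1 hq.1
  have h1 : ‖x - p‖ ≤ ‖x - (1/2 : ℝ) • (p + q)‖ := hp.2 _ hm
  have h2 : ‖x - q‖ = ‖x - p‖ := le_antisymm (hq.2 _ hp.1) (hp.2 _ hq.1)
  have par := parallelogram_law_with_norm ℝ (x - p) (x - q)
  have e : (x - p) + (x - q) = (2:ℝ) • (x - (1/2 : ℝ) • (p + q)) := by module
  have e2 : (x - p) - (x - q) = q - p := by abel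
  rw [e, e2, norm_smul] at par
  simp only [Real.norm_ofNat] at par
  have hqp : ‖q - p‖ = 0 := by
    have := norm_nonneg (q - p)
    nlinarith [norm_nonneg (x - p), norm_nonneg (x - (1/2 : ℝ) • (p + q))]
  exact sub_eq_zero.mp (norm_eq_zero.mp hqp)

lemma isProj_of_inner {x p : EuclideanSpace ℝ (Fin 3)} (hp : p ∈ Kcone)
    (h0 : ⟪x - p, p⟫_ℝ = 0) (h : ∀ z ∈ Kcone, ⟪x - p, z⟫_ℝ ≤ 0) : IsProjK x p := by
  refine ⟨hp, fun z hz => ?_⟩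
  have h1 : ⟪x - p, z - p⟫_ℝ ≤ 0 := by
    rw [inner_sub_right, h0, sub_zero]; exact h z hz
  have key : ‖x - p‖ ^ 2 ≤ ‖x - z‖ ^ 2 := by
    have e : x - z = (x - p) - (z - p) := by abel
    have key2 := norm_sub_sq_real (x - p) (z - p)
    rw [e]
    nlinarith [sq_nonneg ‖z - p‖]
  nlinarith [norm_nonneg (x - p), norm_nonneg (x - z)]

lemma inner_coords (x y : EuclideanSpace ℝ (Fin 3)) :
    ⟪x, y⟫_ℝ = x 0 * y 0 + x 1 * y 1 + x 2 * y 2 := by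
  simp [PiLp.inner_apply, Fin.sum_univ_three]
  ring

theorem stmt2 :
    ∀ u v : EuclideanSpace ℝ (Fin 3),
      u = (WithLp.equiv 2 _).symm ![1, Real.sqrt 2, 0] →
      v = (WithLp.equiv 2 _).symm ![0, 1 / Real.sqrt 2, 1 / Real.sqrt 2] →
      -- v ≼ u, i.e. u - v ∈ K
      u - v ∈ Kcone ∧
      -- but P_K(v) ⋠ P_K(u), i.e. P_K(u) - P_K(v) ∉ K
      ∀ pu pv : EuclideanSpace ℝ (Fin 3),
        IsProjK u pu → IsProjK v pv → pu - pv ∉ Kcone := by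
  intro u v hu hv
  have hs : (0:ℝ) < Real.sqrt 2 := by positivity
  have hs2 : Real.sqrt 2 ^ 2 = 2 := Real.sq_sqrt (by norm_num)
  have h1le : (1:ℝ) ≤ Real.sqrt 2 := by nlinarith
  -- coordinates of u and v
  have hu0 : u 0 = 1 := by rw [hu]; simp [PiLp.toLp_apply]
  have hu1 : u 1 = Real.sqrt 2 := by rw [hu]; simp [PiLp.toLp_apply]
  have hu2 : u 2 = 0 := by rw [hu]; simp [PiLp.toLp_apply]
  have hv0 : v 0 = 0 := by rw [hv]; simp [PiLp.toLp_apply]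
  have hv1 : v 1 = 1 / Real.sqrt 2 := by rw [hv]; simp [PiLp.toLp_apply]
  have hv2 : v 2 = 1 / Real.sqrt 2 := by rw [hv]; simp [PiLp.toLp_apply]
  set P : EuclideanSpace ℝ (Fin 3) :=
    (WithLp.equiv 2 _).symm ![(1 + Real.sqrt 2)/2, (1 + Real.sqrt 2)/2, 0] with hP
  set Q : EuclideanSpace ℝ (Fin 3) :=
    (WithLp.equiv 2 _).symm ![1/2, Real.sqrt 2/4, Real.sqrt 2/4] with hQ
  have hP0 : P 0 = (1 + Real.sqrt 2)/2 := by rw [hP]; simp [PiLp.toLp_apply]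
  have hP1 : P 1 = (1 + Real.sqrt 2)/2 := by rw [hP]; simp [PiLp.toLp_apply]
  have hP2 : P 2 = 0 := by rw [hP]; simp [PiLp.toLp_apply]
  have hQ0 : Q 0 = 1/2 := by rw [hQ]; simp [PiLp.toLp_apply]
  have hQ1 : Q 1 = Real.sqrt 2/4 := by rw [hQ]; simp [PiLp.toLp_apply]
  have hQ2 : Q 2 = Real.sqrt 2/4 := by rw [hQ]; simp [PiLp.toLp_apply]
  constructor
  · rw [memK_iff]
    simp only [PiLp.sub_apply, hu0, hu1, hu2, hv0, hv1, hv2]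
    constructor
    · norm_num
    · have : Real.sqrt 2 - 1 / Real.sqrt 2 = 1 / Real.sqrt 2 := by
        field_simp; nlinarith
      rw [this]
      have h12 : (1 / Real.sqrt 2 : ℝ) ^ 2 = 1/2 := by
        rw [div_pow, hs2]; norm_num
      nlinarith [h12]
  · have hPproj : IsProjK u P := by
      apply isProj_of_inner
      · rw [memK_iff, hP0, hP1, hP2]
        constructor
        · positivity
        · nlinarith
      · rw [inner_coords]
        simp only [PiLp.sub_apply, hu0, hu1, hu2, hP0, hP1, hP2]
        ring
      · intro z hz
        rw [memK_iff] at hz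
        obtain ⟨hz0, hzq⟩ := hz
        have hz1 : z 1 ≤ z 0 := by nlinarith
        rw [inner_coords]
        simp only [PiLp.sub_apply, hu0, hu1, hu2, hP0, hP1, hP2]
        nlinarith [mul_nonneg (sub_nonneg.mpr h1le) (sub_nonneg.mpr hz1)]
    have hQproj : IsProjK v Q := by
      apply isProj_of_inner
      · rw [memK_iff, hQ0, hQ1, hQ2]
        constructor
        · norm_num
        · nlinarith
      · rw [inner_coords]
        simp only [PiLp.sub_apply, hv0, hv1, hv2, hQ0, hQ1, hQ2]
        field_simp
        nlinarith
      · intro z hz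
        rw [memK_iff] at hz
        obtain ⟨hz0, hzq⟩ := hz
        have hkey : z 1 + z 2 ≤ Real.sqrt 2 * z 0 := by
          nlinarith [sq_nonneg (z 1 - z 2), mul_nonneg hs.le hz0,
            sq_nonneg (Real.sqrt 2 * z 0 - z 1 - z 2)]
        rw [inner_coords]
        simp only [PiLp.sub_apply, hv0, hv1, hv2, hQ0, hQ1, hQ2]
        have hinv : (1:ℝ) / Real.sqrt 2 = Real.sqrt 2 / 2 := by
          field_simp
          exact hs2.symm
        rw [hinv]
        have : (0:ℝ) - 1/2 * z 0 + (Real.sqrt 2/2 - Real.sqrt 2/4) * z 1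
            + (Real.sqrt 2/2 - Real.sqrt 2/4) * z 2
            = (Real.sqrt 2/4) * ((z 1 + z 2) - Real.sqrt 2 * z 0) := by
          nlinarith [hs2]
        nlinarith [mul_nonneg (by positivity : (0:ℝ) ≤ Real.sqrt 2/4)
          (sub_nonneg.mpr hkey)]
    intro pu pv hpu hpv
    rw [proj_unique hPproj hpu, proj_unique hQproj hpv]
    rw [memK_iff]
    simp only [PiLp.sub_apply, hP0, hP1, hP2, hQ0, hQ1, hQ2]
    rintro ⟨-, h⟩
    nlinarith
end

section
/- Let (P, ≽) be a poset in which every chain has a greatest lower bound (re-chain-complete), and let F : P → (nonempty subsets of P) be a set-valued map such that: (a) F is order-increasing downward (x ≼ y implies for every w ∈ F(y) there is z ∈ F(x) with z ≼ w); (b) each F(x) is universally re-inductive; (c) there exist y* ∈ P and v* ∈ F(y*) with v* ≼ y*. Then F has a fixed point (a point x with x ∈ F(x)), and moreover it has a fixed point x* with x* ≼ y*. -/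
/-- A subset `A` of a poset is universally re-inductive if for every nonempty chain `C`
such that each element of `C` has a lower cover in `A`, the chain `C` has a lower bound
lying in `A`. -/
def UnivReInductive {P : Type*} [PartialOrder P] (A : Set P) : Prop :=
  ∀ C : Set P, C.Nonempty → IsChain (· ≤ ·) C →
    (∀ c ∈ C, ∃ a ∈ A, a ≤ c) → ∃ a ∈ A, ∀ c ∈ C, a ≤ c

theorem stmt15 {P : Type*} [PartialOrder P]
    -- re-chain-complete: every nonempty chain has a greatest lower bound
    (hcc : ∀ C : Set P, C.Nonempty → IsChain (· ≤ ·) C → ∃ g, IsGLB C g)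
    (F : P → Set P) (hFne : ∀ x, (F x).Nonempty)
    -- (a) F is order-increasing downward
    (hdec : ∀ x y : P, x ≤ y → ∀ w ∈ F y, ∃ z ∈ F x, z ≤ w)
    -- (b) each value of F is universally re-inductive
    (hind : ∀ x, UnivReInductive (F x))
    -- (c)
    (ystar vstar : P) (hv : vstar ∈ F ystar) (hvy : vstar ≤ ystar) :
    (∃ x, x ∈ F x) ∧ ∃ xstar, xstar ∈ F xstar ∧ xstar ≤ ystar := by
  set A : Set Pᵒᵈ := {x : Pᵒᵈ | OrderDual.ofDual x ≤ ystar ∧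
      ∃ u ∈ F (OrderDual.ofDual x), u ≤ OrderDual.ofDual x} with hA
  have hyA : OrderDual.toDual ystar ∈ A := ⟨le_rfl, vstar, hv, hvy⟩
  have key : ∀ c ⊆ A, IsChain (· ≤ ·) c → ∀ y ∈ c,
      ∃ ub ∈ A, ∀ z ∈ c, z ≤ ub := by
    intro C hCA hC y hy
    set C' : Set P := OrderDual.ofDual '' C with hC'def
    have hC' : IsChain (· ≤ ·) C' := by
      rintro _ ⟨a, ha, rfl⟩ _ ⟨b, hb, rfl⟩ hab
      rcases hC ha hb (fun h => hab (congrArg _ h)) with h | h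
      · exact Or.inr h
      · exact Or.inl h
    have hCne : C'.Nonempty := ⟨OrderDual.ofDual y, y, hy, rfl⟩
    obtain ⟨g, hg⟩ := hcc C' hCne hC'
    have hcov : ∀ c ∈ C', ∃ a ∈ F g, a ≤ c := by
      intro c hc
      obtain ⟨z, hz, rfl⟩ := hc
      obtain ⟨_, u, hu, huc⟩ := hCA hz
      obtain ⟨w, hw, hwu⟩ := hdec g _ (hg.1 ⟨z, hz, rfl⟩) u hu
      exact ⟨w, hw, hwu.trans huc⟩
    obtain ⟨a, haF, halb⟩ := hind g C' hCne hC' hcov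
    have hag : a ≤ g := hg.2 halb
    have hgy : g ≤ ystar := by
      have := hg.1 (⟨y, hy, rfl⟩ : OrderDual.ofDual y ∈ C')
      exact this.trans (hCA hy).1
    refine ⟨OrderDual.toDual g, ⟨hgy, a, haF, hag⟩, ?_⟩
    intro z hz
    exact hg.1 ⟨z, hz, rfl⟩
  obtain ⟨m, hym, hmA, hmax⟩ := zorn_le_nonempty₀ (α := Pᵒᵈ) A key
    (OrderDual.toDual ystar) hyA
  obtain ⟨hmy, u, huF, hum⟩ := hmA
  have huA : OrderDual.toDual u ∈ A := by
    obtain ⟨z, hz, hzu⟩ := hdec u (OrderDual.ofDual m) hum u huF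
    exact ⟨hum.trans hmy, z, hz, hzu⟩
  have hmu : m = OrderDual.toDual u := by
    have h1 : m ≤ OrderDual.toDual u := hum
    exact le_antisymm h1 (hmax huA h1)
  have hfix : OrderDual.ofDual m ∈ F (OrderDual.ofDual m) := by
    subst hmu; exact huF
  exact ⟨⟨_, hfix⟩, OrderDual.ofDual m, hfix, hmy⟩
end

section
/- Let (P, ≽) be re-chain-complete and let B = {z ∈ P : ∃ v ∈ F(z), v ≼ z}, where F is order-increasing downward with universally re-inductive values and B is nonempty. Then every ≽-minimal element of B is a fixed point of F. -/
theorem stmt16 {P : Type*} [PartialOrder P]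
    -- re-chain-complete: every nonempty chain has a greatest lower bound
    (hcc : ∀ C : Set P, C.Nonempty → IsChain (· ≤ ·) C → ∃ g, IsGLB C g)
    (F : P → Set P) (hFne : ∀ x, (F x).Nonempty)
    (hdec : ∀ x y : P, x ≤ y → ∀ w ∈ F y, ∃ z ∈ F x, z ≤ w)
    (hind : ∀ x, UnivReInductive (F x))
    (B : Set P) (hB : B = {z : P | ∃ v ∈ F z, v ≤ z}) (hBne : B.Nonempty) :
    ∀ y ∈ B, (∀ z ∈ B, z ≤ y → z = y) → y ∈ F y := by
  intro y hy hmin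
  rw [hB] at hy
  obtain ⟨v, hvF, hvy⟩ := hy
  obtain ⟨z, hzF, hzv⟩ := hdec v y hvy v hvF
  have hvB : v ∈ B := by rw [hB]; exact ⟨z, hzF, hzv⟩
  have := hmin v hvB hvy
  rwa [this] at hvF
end

section
/- Let H be a real Hilbert space and K a closed convex cone in H that is subdual, i.e. ⟨x, z⟩ ≥ 0 for all x, z ∈ K (K ⊆ K*), and suppose the order induced by K is a lattice order in which x⁺ ∧ x⁻ = 0 implies ⟨x⁺, x⁻⟩ = 0. Then the metric projection P_K equals the positive part map: P_K(x) = x⁺ for all x ∈ H, and consequently P_K is order-increasing. -/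
open scoped InnerProductSpace

theorem stmt18 {H : Type*} [NormedAddCommGroup H] [InnerProductSpace ℝ H] [CompleteSpace H]
    (K : Set H) (hKne : K.Nonempty) (hcl : IsClosed K) (hconv : Convex ℝ K)
    (hcone : ∀ c : ℝ, 0 ≤ c → ∀ v ∈ K, c • v ∈ K)
    -- K is subdual: K ⊆ K*
    (hsub : ∀ y ∈ K, ∀ z ∈ K, 0 ≤ ⟪y, z⟫_ℝ)
    -- the order induced by K is a lattice order: `pos x` is the positive part x⁺ = x ∨ 0,
    -- i.e. the least element of K that dominates x in the order induced by K
    (pos : H → H)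
    (hpos : ∀ x, pos x ∈ K ∧ pos x - x ∈ K ∧
      ∀ w, w ∈ K → w - x ∈ K → w - pos x ∈ K)
    -- orthogonality: x⁺ ∧ x⁻ = 0 implies ⟪x⁺, x⁻⟫ = 0
    (horth : ∀ x, ⟪pos x, pos x - x⟫_ℝ = 0) :
    -- P_K = positive part map: pos x is the nearest point of K to x
    (∀ x, ∀ z ∈ K, ‖x - pos x‖ ≤ ‖x - z‖) ∧
    -- consequently P_K is order-increasing
    (∀ x y, y - x ∈ K → pos y - pos x ∈ K) := by
  have hadd : ∀ u ∈ K, ∀ v ∈ K, u + v ∈ K := by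
    intro u hu v hv
    have h := hconv hu hv (by norm_num : (0:ℝ) ≤ 1/2) (by norm_num : (0:ℝ) ≤ 1/2) (by norm_num)
    have h2 := hcone 2 (by norm_num) _ h
    have : (2:ℝ) • ((1/2 : ℝ) • u + (1/2 : ℝ) • v) = u + v := by
      rw [smul_add, smul_smul, smul_smul]; norm_num
    rwa [this] at h2
  constructor
  · intro x z hz
    obtain ⟨hpK, hpxK, _⟩ := hpos x
    have h1 : ⟪pos x - x, pos x⟫_ℝ = 0 := by
      rw [real_inner_comm]; exact horth x
    have h2 : 0 ≤ ⟪pos x - x, z⟫_ℝ := hsub _ hpxK _ hz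
    have hkey : 0 ≤ ⟪x - pos x, pos x - z⟫_ℝ := by
      have : ⟪x - pos x, pos x - z⟫_ℝ = ⟪pos x - x, z⟫_ℝ - ⟪pos x - x, pos x⟫_ℝ := by
        simp [inner_sub_left, inner_sub_right]; ring
      rw [this, h1]; linarith
    have hsq : ‖x - pos x‖^2 ≤ ‖x - z‖^2 := by
      have hxz : x - z = (x - pos x) + (pos x - z) := by abel
      rw [hxz, norm_add_sq_real]
      nlinarith [sq_nonneg ‖pos x - z‖]
    exact (pow_le_pow_iff_left₀ (norm_nonneg _) (norm_nonneg _) two_ne_zero).mp hsq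
  · intro x y hyx
    obtain ⟨hpyK, hpyy, _⟩ := hpos y
    obtain ⟨_, _, hminx⟩ := hpos x
    exact hminx (pos y) hpyK (by have := hadd _ hpyy _ hyx; simpa using this)
end
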